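/- Let M > 0, Q, J be real numbers with d := M^2 - Q^2 - J^2/M^2 ≥ 0, and define A := 4π(2M^2 - Q^2 + 2M√d). Then A ≥ 4π√(Q^4 + 4J^2). -/

import Mathlib

open Real

/- The horizon area is 4π(r₊² + a²) with r₊ = M + √d and a = J/M, i.e. 4π(2M² - Q² + 2M√d).
Dropping the nonnegative term 2M√d leaves 4π(2M² - Q²), and
(2M² - Q²)² - (Q⁴ + 4J²) = 4M²d ≥ 0. -/

lemma sq_two_mul_sq_sub_sq_sub_eq {M : ℝ} (hM : M ≠ 0) (Q J : ℝ) :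
    (2 * M ^ 2 - Q ^ 2) ^ 2 - (Q ^ 4 + 4 * J ^ 2) = 4 * M ^ 2 * (M ^ 2 - Q ^ 2 - J ^ 2 / M ^ 2) := by
  field_simp
  ring

lemma sqrt_pow_four_add_four_mul_sq_le {M Q J : ℝ} (hM : M ≠ 0)
    (hd : 0 ≤ M ^ 2 - Q ^ 2 - J ^ 2 / M ^ 2) :
    √(Q ^ 4 + 4 * J ^ 2) ≤ 2 * M ^ 2 - Q ^ 2 := by
  have hJ : 0 ≤ J ^ 2 / M ^ 2 := by positivity
  refine Real.sqrt_le_iff.mpr ⟨by nlinarith [sq_nonneg M], ?_⟩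
  have := sq_two_mul_sq_sub_sq_sub_eq hM Q J
  nlinarith [mul_nonneg (sq_nonneg M) hd]

theorem kerr_newman_area_ge (M Q J d A : ℝ) (hM : 0 < M)
    (hd : d = M ^ 2 - Q ^ 2 - J ^ 2 / M ^ 2) (hd0 : 0 ≤ d)
    (hA : A = 4 * π * (2 * M ^ 2 - Q ^ 2 + 2 * M * Real.sqrt d)) :
    A ≥ 4 * π * Real.sqrt (Q ^ 4 + 4 * J ^ 2) := by
  have hQJ : √(Q ^ 4 + 4 * J ^ 2) ≤ 2 * M ^ 2 - Q ^ 2 :=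
    sqrt_pow_four_add_four_mul_sq_le hM.ne' (hd ▸ hd0)
  have hMd : 0 ≤ 2 * M * √d := by positivity
  rw [hA, ge_iff_le]
  gcongr
  linarith
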